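/- arXiv:1804.00563 — 2 statements merged into one kernel-verified Lean document; each statement's English description precedes it below -/
import Mathlib

section
/- Heine's identity: Let w : ℂ → ℂ be a function and Γ a contour such that the moments μ_m = ∫_Γ t^m w(t) dt exist for 0 ≤ m ≤ 2n−2. Then det(μ_{j+k})_{j,k=0}^{n−1} = (1/n!) ∫_{Γ^n} Δ_n(t)^2 Π_{k=1}^n w(t_k) dt_k, where Δ_n(t) = Π_{1≤j<k≤n} (t_k − t_j). -/
/-!
Heine's identity is Andréief's identity `n! det (∫ fᵢ gⱼ dμ) = ∫ det (fⱼ(xᵢ)) det (gⱼ(xᵢ)) dμⁿ`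
for `fⱼ(t) = tʲ w(t)` and `gⱼ(t) = tʲ`, where both determinants are Vandermonde determinants (the
first one times `∏ᵢ w(xᵢ)`). For Andréief's identity, expanding `det (∫ fᵢ gⱼ)` over permutations
and applying Fubini gives `∫ det (fⱼ(xᵢ)) ∏ᵢ gᵢ(xᵢ)`. Permuting the `gⱼ` by `τ` multiplies the
left side by `sign τ`, so summing `sign τ` times these identities over all `n!` permutations
antisymmetrizes `∏ᵢ gᵢ(xᵢ)` into `det (gⱼ(xᵢ))`.
-/

open MeasureTheory Matrix Finset Equiv

variable {α ι : Type*} [Fintype ι] [DecidableEq ι]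

def collocationMatrix {R : Type*} (f : ι → α → R) (x : ι → α) : Matrix ι ι R :=
  of fun i j => f j (x i)

section Algebra

variable {R : Type*} [CommRing R]

lemma det_collocationMatrix (f : ι → α → R) (x : ι → α) :
    (collocationMatrix f x).det = ∑ σ : Perm ι, ((Perm.sign σ : ℤ) : R) * ∏ i, f (σ i) (x i) := by
  rw [← det_transpose, det_apply']
  rfl

lemma det_collocationMatrix_mul_prod (f g : ι → α → R) (x : ι → α) :
    (collocationMatrix f x).det * ∏ i, g i (x i)
      = ∑ σ : Perm ι, ((Perm.sign σ : ℤ) : R) * ∏ i, (f (σ i) (x i) * g i (x i)) := by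
  simp_rw [det_collocationMatrix, sum_mul, mul_assoc, prod_mul_distrib]

end Algebra

section Integral

variable [MeasurableSpace α] (μ : Measure α) [SigmaFinite μ]

lemma integrable_det_collocationMatrix_mul_prod {𝕜 : Type*} [NormedCommRing 𝕜]
    (f g : ι → α → 𝕜) (hfg : ∀ i j, Integrable (fun a => f i a * g j a) μ) :
    Integrable (fun x => (collocationMatrix f x).det * ∏ i, g i (x i))
      (Measure.pi fun _ => μ) := by
  simp_rw [det_collocationMatrix_mul_prod]
  exact integrable_finsetSum _ fun σ _ =>
    (Integrable.fintype_prod fun i => hfg (σ i) i).const_mul _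

variable {𝕜 : Type*} [RCLike 𝕜]

theorem det_integral_mul_eq_integral_det_mul_prod (f g : ι → α → 𝕜)
    (hfg : ∀ i j, Integrable (fun a => f i a * g j a) μ) :
    (of fun i j => ∫ a, f i a * g j a ∂μ).det
      = ∫ x, (collocationMatrix f x).det * ∏ i, g i (x i) ∂(Measure.pi fun _ => μ) := by
  rw [det_apply']
  simp_rw [det_collocationMatrix_mul_prod]
  rw [integral_finsetSum _ fun σ _ => (Integrable.fintype_prod fun i => hfg (σ i) i).const_mul _]
  refine sum_congr rfl fun σ _ => ?_
  rw [integral_const_mul, integral_fintype_prod_eq_prod (fun i a => f (σ i) a * g i a)]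
  rfl

theorem factorial_mul_det_integral_mul_eq_integral_det_mul_det (f g : ι → α → 𝕜)
    (hfg : ∀ i j, Integrable (fun a => f i a * g j a) μ) :
    ((Fintype.card ι).factorial : 𝕜) * (of fun i j => ∫ a, f i a * g j a ∂μ).det
      = ∫ x, (collocationMatrix f x).det * (collocationMatrix g x).det
          ∂(Measure.pi fun _ => μ) := by
  set D := (of fun i j => ∫ a, f i a * g j a ∂μ).det
  have hperm : ∀ τ : Perm ι,
      (of fun i j => ∫ a, f i a * g (τ j) a ∂μ).det = (Perm.sign τ : ℤ) * D :=
    fun τ => det_permute' τ (of fun i j => ∫ a, f i a * g j a ∂μ)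
  calc ((Fintype.card ι).factorial : 𝕜) * D
      = ∑ τ : Perm ι,
          ((Perm.sign τ : ℤ) : 𝕜) * (of fun i j => ∫ a, f i a * g (τ j) a ∂μ).det := by
        simp_rw [hperm, ← mul_assoc, ← Int.cast_mul, ← Units.val_mul, Int.units_mul_self,
          Units.val_one, Int.cast_one, one_mul, sum_const, card_univ, Fintype.card_perm,
          nsmul_eq_mul]
    _ = ∑ τ : Perm ι, ((Perm.sign τ : ℤ) : 𝕜) *
          ∫ x, (collocationMatrix f x).det * ∏ i, g (τ i) (x i) ∂(Measure.pi fun _ => μ) := by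
        refine sum_congr rfl fun τ _ => ?_
        rw [det_integral_mul_eq_integral_det_mul_prod μ f (fun j => g (τ j))
          fun i j => hfg i (τ j)]
    _ = _ := by
        simp_rw [← integral_const_mul]
        rw [← integral_finsetSum _ fun τ _ => (integrable_det_collocationMatrix_mul_prod μ f
          (fun j => g (τ j)) fun i j => hfg i (τ j)).const_mul _]
        simp_rw [det_collocationMatrix g, mul_sum, mul_left_comm]

theorem factorial_mul_det_hankel_eq_integral_vandermonde_sq {n : ℕ} (p w : α → 𝕜)
    (hmom : ∀ m ≤ 2 * n - 2, Integrable (fun a => p a ^ m * w a) μ) :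
    (n.factorial : 𝕜) * (of fun j k : Fin n => ∫ a, p a ^ ((j : ℕ) + k) * w a ∂μ).det
      = ∫ x : Fin n → α, (∏ j, ∏ k ∈ Ioi j, (p (x k) - p (x j))) ^ 2 * ∏ k, w (x k)
          ∂(Measure.pi fun _ => μ) := by
  have hentry : ∀ (j k : Fin n) a,
      w a * p a ^ (j : ℕ) * p a ^ (k : ℕ) = p a ^ ((j : ℕ) + k) * w a :=
    fun _ _ _ => by ring
  have h := factorial_mul_det_integral_mul_eq_integral_det_mul_det μ
    (fun (j : Fin n) a => w a * p a ^ (j : ℕ)) (fun (k : Fin n) a => p a ^ (k : ℕ))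
    (fun j k => by simp_rw [hentry]; exact hmom _ (by omega))
  simp_rw [hentry, Fintype.card_fin] at h
  rw [h]
  congr with x
  have hf : (collocationMatrix (fun (j : Fin n) a => w a * p a ^ (j : ℕ)) x).det
      = (∏ i, w (x i)) * (vandermonde fun i => p (x i)).det :=
    det_mul_column _ _
  have hg : collocationMatrix (fun (k : Fin n) a => p a ^ (k : ℕ)) x
      = vandermonde fun i => p (x i) := rfl
  rw [hf, hg, det_vandermonde]
  ring

end Integral

/-- Heine's identity: the n×n Hankel determinant of the moments of a weight w on ℝ
equals (1/n!) times the n-fold integral of the squared Vandermonde against the weight. -/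
theorem stmt3 (n : ℕ) (w : ℝ → ℂ)
    (hmom : ∀ m : ℕ, m ≤ 2 * n - 2 → Integrable (fun t : ℝ => (t : ℂ) ^ m * w t)) :
    Matrix.det (Matrix.of fun j k : Fin n =>
      ∫ t : ℝ, (t : ℂ) ^ ((j : ℕ) + (k : ℕ)) * w t)
    = (1 / (n.factorial : ℂ)) *
      ∫ t : Fin n → ℝ,
        (∏ j : Fin n, ∏ k ∈ Finset.Ioi j, ((t k : ℂ) - (t j : ℂ))) ^ 2 *
          ∏ k : Fin n, w (t k) := by
  rw [volume_pi, ← factorial_mul_det_hankel_eq_integral_vandermonde_sq volume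
    (fun t : ℝ => (t : ℂ)) w hmom, ← mul_assoc, one_div,
    inv_mul_cancel₀ (Nat.cast_ne_zero.2 n.factorial_ne_zero), one_mul]
end

section
/- For every real C > 0 and natural number d ≥ 1, ∫_{ℝ^d} Δ_d(v)^2 Π_{k=1}^d e^{−C v_k²} dv_k = (2π)^{d/2} / (2C)^{d²/2} · Π_{k=1}^d k!, where Δ_d(v) = Π_{1≤j<k≤d} (v_k − v_j). -/
/-!
The Vandermonde determinant `det (v_i ^ j)` equals `det (He_j (v_i))` for any monic polynomials
`He_j` of degree `j`; take the (probabilists') Hermite polynomials. Integration by parts shows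
that `X - d/dx` is adjoint to `d/dx` for the weight `exp (-x²/2)`, and since
`He_{n+1} = (X - d/dx) He_n` and `He_n' = n He_{n-1}`, the `He_n` are orthogonal with
`∫ He_n² exp (-x²/2) = n! √(2π)`. Expanding the squared determinant over pairs of permutations,
only the diagonal pairs survive, which gives `d! ∏_{j<d} j! (2π)^{d/2}` for `C = 1/2`. The general
case follows from the substitution `v = u / √(2C)`: the Vandermonde product is homogeneous of
degree `d(d-1)/2` and the Jacobian contributes `d` more factors.
-/

open Polynomial MeasureTheory Real Filter Topology
open scoped Nat

lemma Equiv.Perm.prod_ite_apply_eq_apply {ι M : Type*} [Fintype ι] [DecidableEq ι]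
    [CommMonoidWithZero M] (σ τ : Equiv.Perm ι) (g : ι → M) :
    ∏ i, (if σ i = τ i then g (σ i) else 0) = if σ = τ then ∏ i, g i else 0 := by
  split_ifs with h
  · subst h
    simp [Equiv.prod_comp]
  · obtain ⟨i, hi⟩ : ∃ i, σ i ≠ τ i := by
      by_contra! h'
      exact h (Equiv.ext h')
    exact Finset.prod_eq_zero (Finset.mem_univ i) (if_neg hi)

theorem integral_det_sq_mul_prod_of_orthogonal {ι α : Type*} [Fintype ι] [DecidableEq ι]
    [MeasureSpace α] [SigmaFinite (volume : Measure α)] (f : ι → α → ℝ) (w : α → ℝ) (c : ι → ℝ)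
    (hint : ∀ i j, Integrable fun x => f i x * f j x * w x)
    (horth : ∀ i j, ∫ x, f i x * f j x * w x = if i = j then c i else 0) :
    ∫ x : ι → α, (Matrix.of fun i j => f j (x i)).det ^ 2 * ∏ i, w (x i) =
      (Fintype.card ι)! * ∏ i, c i := by
  set ε : Equiv.Perm ι → ℝ := fun σ => ((Equiv.Perm.sign σ : ℤ) : ℝ)
  have hexpand : ∀ x : ι → α, (Matrix.of fun i j => f j (x i)).det ^ 2 * ∏ i, w (x i) =
      ∑ σ : Equiv.Perm ι, ∑ τ : Equiv.Perm ι,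
        ε σ * ε τ * ∏ i, (f (σ i) (x i) * f (τ i) (x i) * w (x i)) := fun x => by
    rw [← Matrix.det_transpose, Matrix.det_apply, sq, Finset.sum_mul_sum, Finset.sum_mul]
    refine Finset.sum_congr rfl fun σ _ => ?_
    rw [Finset.sum_mul]
    refine Finset.sum_congr rfl fun τ _ => ?_
    simp only [Units.smul_def, zsmul_eq_mul, Matrix.transpose_apply, Matrix.of_apply,
      Finset.prod_mul_distrib, ε]
    ring
  have hterm : ∀ σ τ : Equiv.Perm ι,
      ∫ x : ι → α, ε σ * ε τ * ∏ i, (f (σ i) (x i) * f (τ i) (x i) * w (x i)) =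
        if σ = τ then ∏ i, c i else 0 := fun σ τ => by
    rw [integral_const_mul, integral_fintype_prod_volume_eq_prod
      (fun i x => f (σ i) x * f (τ i) x * w x)]
    simp only [horth, Equiv.Perm.prod_ite_apply_eq_apply]
    split_ifs with h
    · subst h
      simp [ε, ← Int.cast_mul, ← Units.val_mul, Int.units_mul_self]
    · simp
  have hint' : ∀ σ τ : Equiv.Perm ι, Integrable fun x : ι → α =>
      ε σ * ε τ * ∏ i, (f (σ i) (x i) * f (τ i) (x i) * w (x i)) := fun σ τ =>
    (Integrable.fintype_prod (f := fun i x => f (σ i) x * f (τ i) x * w x)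
      fun i => hint _ _).const_mul _
  simp_rw [hexpand]
  rw [integral_finsetSum _ fun σ _ => integrable_finsetSum _ fun τ _ => hint' σ τ]
  simp_rw [integral_finsetSum _ fun τ _ => hint' _ τ, hterm, Finset.sum_ite_eq, Finset.mem_univ,
    if_true, Finset.sum_const, Finset.card_univ, Fintype.card_perm, nsmul_eq_mul]

namespace Polynomial

theorem derivative_hermite_succ (n : ℕ) :
    derivative (hermite (n + 1)) = ((n : ℤ[X]) + 1) * hermite n := by
  induction n with
  | zero => simp
  | succ n ih =>
    have hrec := hermite_succ n
    rw [hermite_succ (n + 1), derivative_sub, derivative_mul, derivative_X, ih, derivative_mul]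
    simp only [derivative_add, derivative_natCast, derivative_one, add_zero, zero_mul, zero_add]
    push_cast
    linear_combination (-(n : ℤ[X]) - 1) * hrec

end Polynomial

noncomputable def realHermite (n : ℕ) : ℝ[X] := (hermite n).map (Int.castRingHom ℝ)

lemma realHermite_monic (n : ℕ) : (realHermite n).Monic := (hermite_monic n).map _

lemma natDegree_realHermite (n : ℕ) : (realHermite n).natDegree = n := by
  rw [realHermite, (hermite_monic n).natDegree_map, natDegree_hermite]

lemma realHermite_zero : realHermite 0 = 1 := by simp [realHermite]

lemma realHermite_succ (n : ℕ) :
    realHermite (n + 1) = X * realHermite n - derivative (realHermite n) := by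
  simp only [realHermite, hermite_succ, Polynomial.map_sub, Polynomial.map_mul, Polynomial.map_X,
    derivative_map]

lemma derivative_realHermite (n : ℕ) :
    derivative (realHermite n) = (n : ℝ[X]) * realHermite (n - 1) := by
  cases n with
  | zero => simp [realHermite_zero]
  | succ n =>
    rw [realHermite, derivative_map, derivative_hermite_succ, Polynomial.map_mul]
    simp [realHermite]

noncomputable def gaussianWeight (x : ℝ) : ℝ := exp (-(1 / 2) * x ^ 2)

lemma hasDerivAt_gaussianWeight (x : ℝ) : HasDerivAt gaussianWeight (-x * gaussianWeight x) x := by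
  unfold gaussianWeight
  convert ((hasDerivAt_pow 2 x).const_mul (-(1 / 2) : ℝ)).exp using 1
  norm_num
  ring

lemma eval_mul_gaussianWeight_eq_sum (P : ℝ[X]) :
    (fun x => P.eval x * gaussianWeight x) =
      fun x => ∑ k ∈ Finset.range (P.natDegree + 1), P.coeff k * (x ^ k * gaussianWeight x) := by
  ext x
  simp only [eval_eq_sum_range, Finset.sum_mul, mul_assoc]

lemma integrable_eval_mul_gaussianWeight (P : ℝ[X]) :
    Integrable fun x => P.eval x * gaussianWeight x := by
  rw [eval_mul_gaussianWeight_eq_sum]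
  refine integrable_finsetSum _ fun k _ => Integrable.const_mul ?_ _
  simpa [gaussianWeight, rpow_natCast] using integrable_rpow_mul_exp_neg_mul_sq (b := 1 / 2)
    (by norm_num) (s := k) (neg_one_lt_zero.trans_le k.cast_nonneg)

lemma tendsto_eval_mul_gaussianWeight_cocompact (P : ℝ[X]) :
    Tendsto (fun x => P.eval x * gaussianWeight x) (cocompact ℝ) (𝓝 0) := by
  rw [eval_mul_gaussianWeight_eq_sum, ← Finset.sum_const_zero (s := Finset.range (P.natDegree + 1))]
  refine tendsto_finsetSum _ fun k _ => ?_
  rw [← mul_zero (P.coeff k)]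
  refine Tendsto.const_mul _ ?_
  rw [tendsto_zero_iff_norm_tendsto_zero]
  simpa [gaussianWeight, rpow_natCast, abs_mul, abs_pow] using
    tendsto_rpow_abs_mul_exp_neg_mul_sq_cocompact (a := 1 / 2) (by norm_num) k

theorem integral_eval_derivative_sub_X_mul_mul_gaussianWeight (P : ℝ[X]) :
    ∫ x, (derivative P - X * P).eval x * gaussianWeight x = 0 := by
  have hderiv : ∀ x, HasDerivAt (fun x => P.eval x * gaussianWeight x)
      ((derivative P - X * P).eval x * gaussianWeight x) x := fun x => by
    refine ((P.hasDerivAt x).mul (hasDerivAt_gaussianWeight x)).congr_deriv ?_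
    simp only [eval_sub, eval_mul, eval_X]
    ring
  have hlim := tendsto_eval_mul_gaussianWeight_cocompact P
  simpa using integral_of_hasDerivAt_of_tendsto hderiv (integrable_eval_mul_gaussianWeight _)
    (hlim.mono_left atBot_le_cocompact) (hlim.mono_left atTop_le_cocompact)

theorem integral_eval_X_mul_sub_derivative_mul_mul_gaussianWeight (P Q : ℝ[X]) :
    ∫ x, ((X * P - derivative P) * Q).eval x * gaussianWeight x =
      ∫ x, (P * derivative Q).eval x * gaussianWeight x := by
  have hsplit : (X * P - derivative P) * Q =
      P * derivative Q - (derivative (P * Q) - X * (P * Q)) := by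
    rw [derivative_mul]; ring
  have hpoint : ∀ x, ((X * P - derivative P) * Q).eval x * gaussianWeight x =
      (P * derivative Q).eval x * gaussianWeight x -
        (derivative (P * Q) - X * (P * Q)).eval x * gaussianWeight x := fun x => by
    rw [hsplit, eval_sub, sub_mul]
  simp_rw [hpoint]
  rw [integral_sub (integrable_eval_mul_gaussianWeight _) (integrable_eval_mul_gaussianWeight _)]
  simp only [integral_eval_derivative_sub_X_mul_mul_gaussianWeight, sub_zero]

lemma integral_gaussianWeight : ∫ x, gaussianWeight x = √(2 * π) := by
  simp only [gaussianWeight, integral_gaussian]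
  congr 1
  field_simp

lemma integral_realHermite_succ_mul (m n : ℕ) :
    ∫ x, (realHermite (m + 1) * realHermite n).eval x * gaussianWeight x =
      n * ∫ x, (realHermite m * realHermite (n - 1)).eval x * gaussianWeight x := by
  rw [realHermite_succ, integral_eval_X_mul_sub_derivative_mul_mul_gaussianWeight,
    derivative_realHermite, ← integral_const_mul]
  congr 1 with x
  simp only [eval_mul, eval_natCast]
  ring

theorem integral_realHermite_mul_realHermite_mul_gaussianWeight (m n : ℕ) :
    ∫ x, (realHermite m * realHermite n).eval x * gaussianWeight x =
      if m = n then n ! * √(2 * π) else 0 := by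
  induction m generalizing n with
  | zero =>
    cases n with
    | zero => simp [realHermite_zero, integral_gaussianWeight]
    | succ n => rw [mul_comm, integral_realHermite_succ_mul]; simp
  | succ m ih =>
    rw [integral_realHermite_succ_mul, ih]
    cases n with
    | zero => simp
    | succ n =>
      simp only [add_left_inj, add_tsub_cancel_right, Nat.factorial_succ]
      split_ifs <;> push_cast <;> ring

open Matrix

lemma det_vandermonde_eq_det_eval_realHermite {n : ℕ} (v : Fin n → ℝ) :
    (vandermonde v).det = (Matrix.of fun i j : Fin n => (realHermite j).eval (v i)).det :=
  det_eval_matrixOfPolynomials_eq_det_vandermonde v _ (fun i => natDegree_realHermite i)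
    fun i => realHermite_monic i

theorem integral_det_vandermonde_sq_mul_gaussianWeight (n : ℕ) :
    ∫ v : Fin n → ℝ, (vandermonde v).det ^ 2 * ∏ k, gaussianWeight (v k) =
      (Nat.superFactorial n : ℝ) * √(2 * π) ^ n := by
  have hint (i j : Fin n) : Integrable fun x =>
      (realHermite i).eval x * (realHermite j).eval x * gaussianWeight x := by
    simpa only [eval_mul] using integrable_eval_mul_gaussianWeight (realHermite i * realHermite j)
  have horth (i j : Fin n) : ∫ x, (realHermite i).eval x * (realHermite j).eval x *
      gaussianWeight x = if i = j then ((i : ℕ)! * √(2 * π)) else 0 := by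
    simp only [← eval_mul, integral_realHermite_mul_realHermite_mul_gaussianWeight, Fin.val_inj]
    split_ifs with h <;> simp [h]
  simp_rw [det_vandermonde_eq_det_eval_realHermite]
  rw [integral_det_sq_mul_prod_of_orthogonal _ _ _ hint horth, Finset.prod_mul_distrib,
    Finset.prod_const, Finset.card_univ, Fintype.card_fin, ← mul_assoc,
    Fin.prod_univ_eq_prod_range (fun i => (i ! : ℝ)), ← Nat.prod_range_succ_factorial,
    Finset.prod_range_succ]
  push_cast
  ring

lemma det_vandermonde_smul_sq {R : Type*} [CommRing R] {n : ℕ} (c : R) (v : Fin n → R) :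
    (vandermonde (c • v)).det ^ 2 = c ^ (n * (n - 1)) * (vandermonde v).det ^ 2 := by
  have hfactor : vandermonde (c • v) = vandermonde v * diagonal fun j : Fin n => c ^ (j : ℕ) := by
    ext i j
    simp [vandermonde_apply, mul_pow, mul_comm]
  rw [hfactor, det_mul, det_diagonal, Finset.prod_pow_eq_pow_sum,
    Fin.sum_univ_eq_sum_range (fun j => j), ← Finset.sum_range_id_mul_two, pow_mul]
  ring

theorem integral_det_vandermonde_sq_mul_exp_neg_mul_sq {C : ℝ} (hC : 0 < C) (n : ℕ) :
    ∫ v : Fin n → ℝ, (vandermonde v).det ^ 2 * ∏ k, exp (-C * v k ^ 2) =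
      (Nat.superFactorial n : ℝ) * √(2 * π) ^ n / √(2 * C) ^ (n ^ 2) := by
  set c := (√(2 * C))⁻¹ with hc_def
  have hc : 0 < c := by positivity
  have hcsq : c ^ 2 * C = 1 / 2 := by
    rw [hc_def, inv_pow, sq_sqrt (by positivity)]
    field_simp
  have hscale (u : Fin n → ℝ) :
      (vandermonde (c • u)).det ^ 2 * ∏ k, exp (-C * (c • u) k ^ 2) =
        c ^ (n * (n - 1)) * ((vandermonde u).det ^ 2 * ∏ k, gaussianWeight (u k)) := by
    rw [det_vandermonde_smul_sq, mul_assoc]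
    congr 2
    refine Finset.prod_congr rfl fun k _ => ?_
    rw [gaussianWeight, Pi.smul_apply, smul_eq_mul, ← hcsq]
    ring_nf
  have hexp : n + n * (n - 1) = n ^ 2 := by
    cases n <;> simp [sq, Nat.mul_succ]
    ring
  have hsub := Measure.integral_comp_smul (μ := (volume : Measure (Fin n → ℝ)))
    (fun v => (vandermonde v).det ^ 2 * ∏ k, exp (-C * v k ^ 2)) c
  simp only [hscale, integral_const_mul, integral_det_vandermonde_sq_mul_gaussianWeight,
    Module.finrank_fin_fun, smul_eq_mul, abs_inv, abs_pow, abs_of_pos hc] at hsub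
  rw [eq_inv_mul_iff_mul_eq₀ (by positivity)] at hsub
  rw [div_eq_mul_inv, ← inv_pow, ← hc_def, ← hexp, pow_add, ← hsub]
  ring

theorem stmt4_general (C : ℝ) (hC : 0 < C) (d : ℕ) :
    (∫ v : Fin d → ℝ,
      (∏ j : Fin d, ∏ k ∈ Finset.Ioi j, (v k - v j)) ^ 2 *
        ∏ k : Fin d, Real.exp (-C * (v k) ^ 2))
    = (2 * Real.pi) ^ ((d : ℝ) / 2) / (2 * C) ^ (((d : ℝ) ^ 2) / 2) *
      ∏ k ∈ Finset.Icc 1 d, (k.factorial : ℝ) := by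
  simp_rw [← det_vandermonde]
  rw [integral_det_vandermonde_sq_mul_exp_neg_mul_sq hC, ← Nat.cast_prod, Nat.prod_Icc_factorial,
    rpow_div_two_eq_sqrt _ (by positivity), rpow_div_two_eq_sqrt _ (by positivity), rpow_natCast,
    ← Nat.cast_pow, rpow_natCast]
  ring

/-- Gaussian Selberg (Mehta) integral: for C > 0 and d ≥ 1,
∫_{ℝ^d} Δ_d(v)² Π e^{−C v_k²} dv = (2π)^{d/2} (2C)^{−d²/2} Π_{k=1}^d k!. -/
theorem stmt4 (C : ℝ) (hC : 0 < C) (d : ℕ) (hd : 1 ≤ d) :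
    (∫ v : Fin d → ℝ,
      (∏ j : Fin d, ∏ k ∈ Finset.Ioi j, (v k - v j)) ^ 2 *
        ∏ k : Fin d, Real.exp (-C * (v k) ^ 2))
    = (2 * Real.pi) ^ ((d : ℝ) / 2) / (2 * C) ^ (((d : ℝ) ^ 2) / 2) *
      ∏ k ∈ Finset.Icc 1 d, (k.factorial : ℝ) :=
  stmt4_general C hC d
end
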